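/- arXiv:2501.10117 — 5 statements merged into one kernel-verified Lean document; each statement's English description precedes it below -/
import Mathlib

section
/- Let s_1, …, s_{n+1} be exchangeable real random variables, α ∈ (0,1), and let ϑ be the ⌈(1−α)(n+1)⌉-th order statistic of s_1, …, s_n (i.e., the (1−α)(1 + 1/n) empirical quantile of {s_1, …, s_n}, defined as +∞ if ⌈(1−α)(n+1)⌉ > n). Then P(s_{n+1} ≤ ϑ) ≥ 1 − α. -/
/-! Write `rank x i` for the number of coordinates of `x` strictly below `x i`. The event
`s_{n+1} ≤ ϑ` is exactly `rank s (n+1) < k` with `k = ⌈(1-α)(n+1)⌉`. Whatever the values, at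
least `k` of the `n+1` indices have rank below `k`; by exchangeability each index does so with
the same probability, hence `(n+1) P(rank s (n+1) < k) ≥ k ≥ (1-α)(n+1)`. -/

open MeasureTheory Finset

/-- The `k`-th order statistic (1-based) of the values `v 0, …, v (n-1)`, viewed in
`EReal`, defined as `⊤` (i.e. `+∞`) when `k > n`. -/
noncomputable def orderStat (n : ℕ) (v : Fin n → ℝ) (k : ℕ) : EReal :=
  (((Finset.univ.val.map (fun i => (v i : EReal))).sort (· ≤ ·)).getD (k - 1) ⊤)

open scoped ENNReal

theorem List.Pairwise.le_getD_iff_countP_lt_le {α : Type*} [LinearOrder α] {l : List α}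
    (hl : l.Pairwise (· ≤ ·)) {d t : α} (hd : t ≤ d) (i : ℕ) :
    t ≤ l.getD i d ↔ l.countP (· < t) ≤ i := by
  induction l generalizing i with
  | nil => simpa using hd
  | cons a l ih =>
    obtain ⟨ha, hl⟩ := List.pairwise_cons.mp hl
    cases i with
    | zero =>
      simp only [List.getD_cons_zero, List.countP_cons, Nat.le_zero, Nat.add_eq_zero_iff,
        List.countP_eq_zero, decide_eq_true_eq, not_lt, ite_eq_right_iff, one_ne_zero, imp_false]
      exact ⟨fun h => ⟨fun b hb => h.trans (ha b hb), h⟩, And.right⟩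
    | succ i =>
      simp only [List.getD_cons_succ, List.countP_cons, ih hl]
      by_cases hat : a < t
      · simp only [hat, decide_true, if_true]
        omega
      · have hcount : l.countP (· < t) = 0 :=
          List.countP_eq_zero.mpr fun b hb => by simpa using (not_lt.mp hat).trans (ha b hb)
        simp [hcount, hat]

theorem coe_le_orderStat_iff {n : ℕ} (v : Fin n → ℝ) (t : ℝ) {k : ℕ} (hk : 1 ≤ k) :
    (t : EReal) ≤ orderStat n v k ↔ #{i | v i < t} < k := by
  rw [orderStat, (Multiset.pairwise_sort _ _).le_getD_iff_countP_lt_le le_top,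
    ← Multiset.coe_countP, Multiset.sort_eq, Multiset.countP_map]
  simp only [EReal.coe_lt_coe_iff]
  change #{i | v i < t} ≤ k - 1 ↔ _
  omega

section Rank

variable {ι α : Type*} [Fintype ι] [LinearOrder α]

def rank (x : ι → α) (i : ι) : ℕ := #{j | x j < x i}

theorem rank_comp_perm (x : ι → α) (σ : Equiv.Perm ι) (i : ι) :
    rank (x ∘ σ) i = rank x (σ i) := by
  refine Finset.card_bij (fun j _ => σ j) (by simp) (fun _ _ _ _ h => σ.injective h) ?_
  intro j hj
  exact ⟨σ.symm j, by simpa using hj, σ.apply_symm_apply j⟩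

theorem rank_last {n : ℕ} (x : Fin (n + 1) → α) :
    rank x (Fin.last n) = #{i : Fin n | x i.castSucc < x (Fin.last n)} := by
  simp only [rank, Finset.card_filter, Fin.sum_univ_castSucc, lt_irrefl, if_false, add_zero]

/-- A point of minimal value outside `{i | rank x i < k}` has all points below it inside. -/
theorem le_card_rank_lt {k : ℕ} (hk : k ≤ Fintype.card ι) (x : ι → α) :
    k ≤ #{i | rank x i < k} := by
  classical
  by_contra! hlt
  set S : Finset ι := {i | rank x i < k}
  have hSc : Sᶜ.Nonempty := by
    rw [Finset.nonempty_iff_ne_empty, Ne, Finset.compl_eq_empty_iff]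
    intro hS
    rw [hS, Finset.card_univ] at hlt
    omega
  obtain ⟨i, hiS, hmin⟩ := Sᶜ.exists_min_image x hSc
  have hbelow : ({j | x j < x i} : Finset ι) ⊆ S := by
    intro j hj
    by_contra hjS
    exact (Finset.mem_filter.mp hj).2.not_ge (hmin j (Finset.mem_compl.mpr hjS))
  exact Finset.mem_compl.mp hiS (Finset.mem_filter.mpr
    ⟨Finset.mem_univ i, (Finset.card_le_card hbelow).trans_lt hlt⟩)

theorem measurable_rank [MeasurableSpace α] [TopologicalSpace α] [OpensMeasurableSpace α]
    [OrderClosedTopology α] [SecondCountableTopology α] (i : ι) :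
    Measurable fun x : ι → α => rank x i := by
  simp only [rank, Finset.card_filter]
  exact Finset.measurable_sum _ fun j _ => Measurable.ite
    (measurableSet_lt (measurable_pi_apply j) (measurable_pi_apply i))
    measurable_const measurable_const

theorem measurableSet_rank_lt [MeasurableSpace α] [TopologicalSpace α] [OpensMeasurableSpace α]
    [OrderClosedTopology α] [SecondCountableTopology α] (i : ι) (k : ℕ) :
    MeasurableSet {x : ι → α | rank x i < k} :=
  measurable_rank i (MeasurableSet.of_discrete (s := {m | m < k}))

end Rank

theorem MeasureTheory.natCast_mul_measure_univ_le_sum {Ω ι : Type*} [MeasurableSpace Ω]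
    [Fintype ι] (μ : Measure Ω) {A : ι → Set Ω} [∀ i, DecidablePred (· ∈ A i)]
    (hA : ∀ i, MeasurableSet (A i)) {k : ℕ} (hk : ∀ ω, k ≤ #{i | ω ∈ A i}) :
    k * μ Set.univ ≤ ∑ i, μ (A i) := by
  have hcount (ω : Ω) : ∑ i, (A i).indicator 1 ω = (#{i | ω ∈ A i} : ℝ≥0∞) := by
    simp only [Set.indicator_apply, Pi.one_apply, Finset.sum_boole]
  calc (k : ℝ≥0∞) * μ Set.univ = ∫⁻ _, (k : ℝ≥0∞) ∂μ := (lintegral_const _).symm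
    _ ≤ ∫⁻ ω, ∑ i, (A i).indicator 1 ω ∂μ :=
        lintegral_mono fun ω => (hcount ω).symm ▸ Nat.cast_le.mpr (hk ω)
    _ = ∑ i, ∫⁻ ω, (A i).indicator 1 ω ∂μ :=
        lintegral_finsetSum _ fun i _ => measurable_const.indicator (hA i)
    _ = ∑ i, μ (A i) := by simp only [lintegral_indicator_one (hA _)]

section Exchangeable

variable {Ω ι : Type*} [MeasurableSpace Ω] [Fintype ι] (P : Measure Ω) {s : ι → Ω → ℝ}

theorem measure_rank_lt_eq_of_exchangeable (hs : ∀ i, Measurable (s i))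
    (hexch : ∀ σ : Equiv.Perm ι,
      Measure.map (fun ω => fun i => s (σ i) ω) P = Measure.map (fun ω => fun i => s i ω) P)
    (k : ℕ) (i j : ι) :
    P {ω | rank (s · ω) i < k} = P {ω | rank (s · ω) j < k} := by
  classical
  have hB := measurableSet_rank_lt (α := ℝ) j k
  have hrank : (fun ω => fun l => s (Equiv.swap j i l) ω) ⁻¹' {x | rank x j < k}
      = {ω | rank (s · ω) i < k} := by
    ext ω
    simp only [Set.mem_preimage, Set.mem_ofPred_eq]
    rw [← Function.comp_def (fun l => s l ω), rank_comp_perm, Equiv.swap_apply_left]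
  rw [← hrank, ← Measure.map_apply (measurable_pi_lambda _ fun l => hs _) hB, hexch,
    Measure.map_apply (measurable_pi_lambda _ hs) hB]
  rfl

theorem natCast_le_card_mul_measure_rank_lt [IsProbabilityMeasure P]
    (hs : ∀ i, Measurable (s i))
    (hexch : ∀ σ : Equiv.Perm ι,
      Measure.map (fun ω => fun i => s (σ i) ω) P = Measure.map (fun ω => fun i => s i ω) P)
    {k : ℕ} (hk : k ≤ Fintype.card ι) (i : ι) :
    (k : ℝ≥0∞) ≤ Fintype.card ι * P {ω | rank (s · ω) i < k} := by
  have hA : ∀ j, MeasurableSet {ω | rank (s · ω) j < k} := fun j =>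
    measurable_pi_lambda _ hs (measurableSet_rank_lt j k)
  calc (k : ℝ≥0∞) = k * P Set.univ := by rw [measure_univ, mul_one]
    _ ≤ ∑ j, P {ω | rank (s · ω) j < k} :=
        natCast_mul_measure_univ_le_sum P hA fun ω => le_card_rank_lt hk (s · ω)
    _ = Fintype.card ι * P {ω | rank (s · ω) i < k} := by
        simp only [measure_rank_lt_eq_of_exchangeable P hs hexch k _ i, Finset.sum_const,
          Finset.card_univ, nsmul_eq_mul]

end Exchangeable

/-- If `s₁, …, s_{n+1}` are exchangeable real random variables, `α ∈ (0,1)`,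
and `ϑ` is the `⌈(1−α)(n+1)⌉`-th order statistic of `s₁, …, sₙ` (`+∞` if the index exceeds
`n`), then `P(s_{n+1} ≤ ϑ) ≥ 1 − α`. -/
theorem exchangeable_quantile_coverage
    {Ω : Type*} [MeasureSpace Ω] (P : Measure Ω) [IsProbabilityMeasure P]
    (n : ℕ) (s : Fin (n + 1) → Ω → ℝ) (hs : ∀ i, Measurable (s i))
    (hexch : ∀ σ : Equiv.Perm (Fin (n + 1)),
      Measure.map (fun ω => fun i => s (σ i) ω) P = Measure.map (fun ω => fun i => s i ω) P)
    (α : ℝ) (hα : α ∈ Set.Ioo (0 : ℝ) 1) :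
    P {ω | (s (Fin.last n) ω : EReal)
        ≤ orderStat n (fun i => s i.castSucc ω) ⌈(1 - α) * (n + 1)⌉₊}
      ≥ ENNReal.ofReal (1 - α) := by
  obtain ⟨hα0, hα1⟩ := hα
  set k := ⌈(1 - α) * (n + 1)⌉₊
  have hk1 : 1 ≤ k := Nat.one_le_ceil_iff.mpr (by nlinarith)
  have hkn : k ≤ Fintype.card (Fin (n + 1)) := by
    rw [Fintype.card_fin, Nat.ceil_le]
    push_cast
    nlinarith
  have hevent : {ω | (s (Fin.last n) ω : EReal) ≤ orderStat n (fun i => s i.castSucc ω) k}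
      = {ω | rank (s · ω) (Fin.last n) < k} := by
    ext ω
    simp only [Set.mem_ofPred_eq, coe_le_orderStat_iff _ _ hk1, rank_last]
  have hcover := natCast_le_card_mul_measure_rank_lt P hs hexch hkn (Fin.last n)
  rw [Fintype.card_fin, ← ENNReal.ofReal_natCast k] at hcover
  rw [hevent, ge_iff_le, ← ENNReal.mul_le_mul_iff_right
    (show ((n + 1 : ℕ) : ℝ≥0∞) ≠ 0 by simp) (ENNReal.natCast_ne_top _)]
  calc ((n + 1 : ℕ) : ℝ≥0∞) * ENNReal.ofReal (1 - α)
        = ENNReal.ofReal ((1 - α) * (n + 1)) := by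
        rw [mul_comm, ENNReal.ofReal_mul (by linarith)]
        norm_cast
    _ ≤ ENNReal.ofReal k := ENNReal.ofReal_le_ofReal (Nat.le_ceil _)
    _ ≤ _ := hcover
end

section
/- Split-conformal validity under interval censoring: suppose (X_i, Y_i, Y_i^L, Y_i^U), i = 1, …, n+1, are i.i.d. with Y_i^L ≤ Y_i ≤ Y_i^U almost surely. Fix a measurable function Ĉ (depending only on a training subset I_1 ⊂ {1,…,n}) assigning to each x a finite disjoint union of closed intervals ⊔_m [τ_{0m}(x), τ_{1m}(x)]. For j in the calibration set I_2 = {1,…,n} \ I_1 with |I_2| = n_2, compute scores s_j = min_m max(τ_{0m}(X_j) − Y_j^L, Y_j^U − τ_{1m}(X_j)), let ϑ be the ⌈(1−α)(n_2+1)⌉-th smallest score, and set C̃(x) = ⋃_m [τ_{0m}(x) − ϑ, τ_{1m}(x) + ϑ]. Then P(Y_{n+1} ∈ C̃(X_{n+1})) ≥ 1 − α. -/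
/-!
The test point is covered as soon as its score is at most `ϑ`, and by the order-statistic
characterisation this happens whenever fewer than `k = ⌈(1 - α)(n + 1)⌉` of the calibration
scores lie strictly below it. Among any `n + 1` reals at least `k` have fewer than `k` values
strictly below them, and i.i.d. data are exchangeable, so each index has this property with the
same probability `p`; hence `k ≤ (n + 1) p`, i.e. `p ≥ 1 - α`.
-/

open MeasureTheory ProbabilityTheory Finset

section StrictRank

variable {ι α : Type*} [Fintype ι] [LinearOrder α]

def strictRank (v : ι → α) (i : ι) : ℕ := #{j | v j < v i}

lemma strictRank_comp_perm (v : ι → α) (σ : Equiv.Perm ι) (i : ι) :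
    strictRank (v ∘ σ) i = strictRank v (σ i) :=
  card_equiv σ (by simp)

lemma le_card_strictRank_lt (v : ι → α) {k : ℕ} (hk : k ≤ Fintype.card ι) :
    k ≤ #{i | strictRank v i < k} := by
  classical
  set S : Finset ι := {i | strictRank v i < k}
  by_contra! hS
  have hne : Sᶜ.Nonempty := by
    rw [nonempty_iff_ne_empty, Ne, compl_eq_empty_iff]
    intro hSuniv
    rw [hSuniv, card_univ] at hS
    omega
  -- a lowest-valued coordinate outside `S` is beaten only by coordinates of `S`
  obtain ⟨i, hiS, hmin⟩ := exists_min_image Sᶜ v hne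
  have hbelow : ({j | v j < v i} : Finset ι) ⊆ S := fun j hj => by
    by_contra hjS
    exact (mem_filter.1 hj).2.not_ge (hmin j (mem_compl.2 hjS))
  exact mem_compl.1 hiS (mem_filter.2 ⟨mem_univ i, (card_le_card hbelow).trans_lt hS⟩)

lemma strictRank_last {n : ℕ} (v : Fin (n + 1) → α) :
    strictRank v (Fin.last n) = #{j : Fin n | v j.castSucc < v (Fin.last n)} := by
  simp only [strictRank, card_filter, Fin.sum_univ_castSucc, lt_irrefl, if_false, add_zero]

lemma measurable_strictRank [MeasurableSpace α] [TopologicalSpace α] [OpensMeasurableSpace α]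
    [OrderClosedTopology α] [SecondCountableTopology α] (i : ι) :
    Measurable fun v : ι → α => strictRank v i := by
  simp only [strictRank, card_filter]
  refine Finset.measurable_sum _ fun j _ => Measurable.ite ?_ measurable_const measurable_const
  exact measurableSet_lt (measurable_pi_apply j) (measurable_pi_apply i)

lemma measurableSet_strictRank_lt {δ : Type*} [MeasurableSpace δ] [MeasurableSpace α]
    [TopologicalSpace α] [OpensMeasurableSpace α] [OrderClosedTopology α]
    [SecondCountableTopology α] {f : δ → ι → α} (hf : Measurable f) (i : ι) (k : ℕ) :
    MeasurableSet {x | strictRank (f x) i < k} :=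
  (measurable_strictRank i).comp hf (MeasurableSet.of_discrete (s := Set.Iio k))

end StrictRank

lemma List.lt_countP_of_getElem_lt {α : Type*} [Preorder α] [DecidableLT α] {c : α} :
    ∀ {l : List α}, l.Pairwise (· ≤ ·) → ∀ {i : ℕ} (hi : i < l.length), l[i] < c →
      i < l.countP (· < c)
  | a :: l, hl, 0, _, h => by
    rw [List.getElem_cons_zero] at h
    simp [h]
  | a :: l, hl, i + 1, hi, h => by
    rw [List.pairwise_cons] at hl
    have hac : a < c := (hl.1 _ (List.getElem_mem _)).trans_lt h
    have := lt_countP_of_getElem_lt hl.2 (Nat.lt_of_succ_lt_succ hi) h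
    simp [hac, this]

lemma countP_sort_lt_eq_card {n : ℕ} (w : Fin n → ℝ) (c : ℝ) :
    ((univ.val.map fun i => (w i : EReal)).sort (· ≤ ·)).countP (· < (c : EReal))
      = #{j | w j < c} := by
  rw [← Multiset.coe_countP, Multiset.sort_eq, Multiset.countP_map, card_def, filter_val]
  exact congrArg Multiset.card (Multiset.filter_congr fun _ _ => EReal.coe_lt_coe_iff)

lemma le_orderStat_of_card_lt {n k : ℕ} {w : Fin n → ℝ} {c : ℝ} (h : #{j | w j < c} < k) :
    (c : EReal) ≤ orderStat n w k := by
  set l := (univ.val.map fun i => (w i : EReal)).sort (· ≤ ·)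
  by_contra! hlt
  by_cases hk : k - 1 < l.length
  · rw [orderStat, List.getD_eq_getElem _ _ hk] at hlt
    have := List.lt_countP_of_getElem_lt (Multiset.pairwise_sort _ _) hk hlt
    rw [countP_sort_lt_eq_card] at this
    omega
  · rw [orderStat, List.getD_eq_default _ _ (not_lt.1 hk)] at hlt
    exact not_top_lt hlt

lemma measurable_finset_inf' {ι δ α : Type*} [MeasurableSpace δ] [MeasurableSpace α]
    [SemilatticeInf α] [MeasurableInf₂ α] {s : Finset ι} (hs : s.Nonempty) {f : ι → δ → α}
    (hf : ∀ i ∈ s, Measurable (f i)) : Measurable fun x => s.inf' hs fun i => f i x := by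
  simp_rw [← Finset.inf'_apply]
  exact Finset.inf'_induction hs _ (fun _ hf _ hg => hf.inf hg) hf

/-- The conformity score of a censored response `[yL, yU]` against the union of the
intervals `[τ₀ m, τ₁ m]`, `m ∈ s`. -/
def intervalScore {ι : Type*} {s : Finset ι} (hs : s.Nonempty) (τ₀ τ₁ : ι → ℝ) (yL yU : ℝ) : ℝ :=
  s.inf' hs fun m => max (τ₀ m - yL) (yU - τ₁ m)

lemma exists_mem_widened_of_intervalScore_le {ι : Type*} {s : Finset ι} (hs : s.Nonempty)
    {τ₀ τ₁ : ι → ℝ} {yL y yU : ℝ} {θ : EReal} (hθ : (intervalScore hs τ₀ τ₁ yL yU : EReal) ≤ θ)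
    (hyL : yL ≤ y) (hyU : y ≤ yU) :
    ∃ m, (τ₀ m : EReal) - θ ≤ y ∧ (y : EReal) ≤ τ₁ m + θ := by
  obtain ⟨m, -, hm⟩ := exists_mem_eq_inf' hs fun m => max (τ₀ m - yL) (yU - τ₁ m)
  rw [intervalScore, hm] at hθ
  refine ⟨m, ?_, ?_⟩
  · calc (τ₀ m : EReal) - θ ≤ τ₀ m - ((τ₀ m - yL : ℝ) : EReal) :=
          EReal.sub_le_sub le_rfl ((EReal.coe_le_coe_iff.2 (le_max_left _ _)).trans hθ)
      _ = yL := by rw [← EReal.coe_sub]; congr 1; ring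
      _ ≤ y := EReal.coe_le_coe_iff.2 hyL
  · calc (y : EReal) ≤ yU := EReal.coe_le_coe_iff.2 hyU
      _ = τ₁ m + ((yU - τ₁ m : ℝ) : EReal) := by rw [← EReal.coe_add]; congr 1; ring
      _ ≤ τ₁ m + θ := add_le_add le_rfl ((EReal.coe_le_coe_iff.2 (le_max_right _ _)).trans hθ)

open scoped ENNReal Classical in
lemma natCast_le_sum_measure_of_le_card {Ω ι : Type*} [MeasurableSpace Ω] [Fintype ι]
    {μ : Measure Ω} [IsProbabilityMeasure μ] {E : ι → Set Ω} (hE : ∀ i, MeasurableSet (E i))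
    {k : ℕ} (h : ∀ ω, k ≤ #{i | ω ∈ E i}) :
    (k : ℝ≥0∞) ≤ ∑ i, μ (E i) := by
  calc (k : ℝ≥0∞) = ∫⁻ _, (k : ℝ≥0∞) ∂μ := by simp
    _ ≤ ∫⁻ ω, ∑ i, (E i).indicator 1 ω ∂μ := lintegral_mono fun ω => by
        simpa [Set.indicator_apply, sum_boole] using h ω
    _ = ∑ i, μ (E i) := by
        rw [lintegral_finsetSum _ fun i _ => measurable_one.indicator (hE i)]
        simp [lintegral_indicator_one (hE _)]

section Exchangeable

open scoped ENNReal

variable {Ω ι β : Type*} [MeasurableSpace Ω] [MeasurableSpace β] [Fintype ι]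
  {P : Measure Ω} {Z : ι → Ω → β}

theorem map_perm_eq_map_of_iIndepFun (hindep : iIndepFun Z P)
    (hident : ∀ i j, IdentDistrib (Z i) (Z j) P P) (σ : Equiv.Perm ι) :
    P.map (fun ω i => Z (σ i) ω) = P.map (fun ω i => Z i ω) := by
  have hZ : ∀ i, AEMeasurable (Z i) P := fun i => (hident i i).aemeasurable_fst
  rw [(hindep.precomp σ.injective).map_fun_eq_pi_map fun i => hZ (σ i),
    hindep.map_fun_eq_pi_map hZ]
  exact congrArg Measure.pi (funext fun i => (hident (σ i) i).map_eq)

variable {g : β → ℝ} {k : ℕ}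

lemma measure_strictRank_lt_eq (hZ : ∀ i, Measurable (Z i)) (hindep : iIndepFun Z P)
    (hident : ∀ i j, IdentDistrib (Z i) (Z j) P P) (hg : Measurable g) (i j : ι) :
    P {ω | strictRank (fun l => g (Z l ω)) i < k}
      = P {ω | strictRank (fun l => g (Z l ω)) j < k} := by
  classical
  set A : Set (ι → β) := {z | strictRank (g ∘ z) j < k}
  have hA : MeasurableSet A := measurableSet_strictRank_lt
    (measurable_pi_lambda _ fun l => hg.comp (measurable_pi_apply l)) j k
  have hswap : {ω | strictRank (fun l => g (Z l ω)) i < k}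
      = (fun ω l => Z (Equiv.swap i j l) ω) ⁻¹' A := by
    ext ω
    show _ ↔ strictRank ((fun l => g (Z l ω)) ∘ Equiv.swap i j) j < k
    rw [strictRank_comp_perm, Equiv.swap_apply_right]
    rfl
  rw [hswap, ← Measure.map_apply (measurable_pi_lambda _ fun l => hZ _) hA,
    map_perm_eq_map_of_iIndepFun hindep hident, Measure.map_apply (measurable_pi_lambda _ hZ) hA]
  rfl

lemma natCast_le_card_mul_measure_strictRank_lt [IsProbabilityMeasure P]
    (hZ : ∀ i, Measurable (Z i)) (hindep : iIndepFun Z P)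
    (hident : ∀ i j, IdentDistrib (Z i) (Z j) P P) (hg : Measurable g)
    (hk : k ≤ Fintype.card ι) (i₀ : ι) :
    (k : ℝ≥0∞) ≤ Fintype.card ι * P {ω | strictRank (fun l => g (Z l ω)) i₀ < k} := by
  have hscores : Measurable fun ω l => g (Z l ω) :=
    measurable_pi_lambda _ fun l => hg.comp (hZ l)
  calc (k : ℝ≥0∞) ≤ ∑ i, P {ω | strictRank (fun l => g (Z l ω)) i < k} :=
        natCast_le_sum_measure_of_le_card (fun i => measurableSet_strictRank_lt hscores i k)
          fun ω => by convert le_card_strictRank_lt (fun l => g (Z l ω)) hk; exact Iff.rfl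
    _ = _ := by
        simp [measure_strictRank_lt_eq hZ hindep hident hg _ i₀, sum_const, card_univ]

end Exchangeable

theorem split_conformal_validity_interval_censoring_general
    {Ω 𝓧 : Type*} [MeasureSpace Ω] [MeasurableSpace 𝓧]
    (P : Measure Ω) [IsProbabilityMeasure P]
    (n : ℕ) (X : Fin (n + 1) → Ω → 𝓧) (Y YL YU : Fin (n + 1) → Ω → ℝ)
    (hX : ∀ i, Measurable (X i)) (hY : ∀ i, Measurable (Y i))
    (hYL : ∀ i, Measurable (YL i)) (hYU : ∀ i, Measurable (YU i))
    (hbound : ∀ i, ∀ᵐ ω ∂P, YL i ω ≤ Y i ω ∧ Y i ω ≤ YU i ω)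
    (hindep : iIndepFun
      (fun i ω => (X i ω, Y i ω, YL i ω, YU i ω)) P)
    (hident : ∀ i j : Fin (n + 1), IdentDistrib
      (fun ω => (X i ω, Y i ω, YL i ω, YU i ω))
      (fun ω => (X j ω, Y j ω, YL j ω, YU j ω)) P P)
    (M : ℕ) (hM : 0 < M) (τ₀ τ₁ : 𝓧 → Fin M → ℝ)
    (hτ₀ : ∀ m, Measurable fun x => τ₀ x m) (hτ₁ : ∀ m, Measurable fun x => τ₁ x m)
    (α : ℝ) (hα : α ∈ Set.Ioo (0 : ℝ) 1) :
    P {ω | ∃ m,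
        (τ₀ (X (Fin.last n) ω) m : EReal)
            - orderStat n (fun j => Finset.univ.inf'
                (Finset.univ_nonempty_iff.mpr (Fin.pos_iff_nonempty.mp hM))
                (fun m' => max (τ₀ (X j.castSucc ω) m' - YL j.castSucc ω)
                  (YU j.castSucc ω - τ₁ (X j.castSucc ω) m'))) ⌈(1 - α) * (n + 1)⌉₊
          ≤ (Y (Fin.last n) ω : EReal) ∧
        (Y (Fin.last n) ω : EReal)
          ≤ (τ₁ (X (Fin.last n) ω) m : EReal)
            + orderStat n (fun j => Finset.univ.inf'
                (Finset.univ_nonempty_iff.mpr (Fin.pos_iff_nonempty.mp hM))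
                (fun m' => max (τ₀ (X j.castSucc ω) m' - YL j.castSucc ω)
                  (YU j.castSucc ω - τ₁ (X j.castSucc ω) m'))) ⌈(1 - α) * (n + 1)⌉₊}
      ≥ ENNReal.ofReal (1 - α) := by
  set k := ⌈(1 - α) * (n + 1)⌉₊
  have hk : k ≤ Fintype.card (Fin (n + 1)) := by
    rw [Fintype.card_fin, Nat.ceil_le]
    push_cast
    nlinarith [hα.1]
  have hMne := Finset.univ_nonempty_iff.mpr (Fin.pos_iff_nonempty.mp hM)
  let g : 𝓧 × ℝ × ℝ × ℝ → ℝ := fun z => intervalScore hMne (τ₀ z.1) (τ₁ z.1) z.2.2.1 z.2.2.2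
  have hg : Measurable g := measurable_finset_inf' _ fun m _ =>
    (((hτ₀ m).comp measurable_fst).sub measurable_snd.snd.fst).max
      (measurable_snd.snd.snd.sub ((hτ₁ m).comp measurable_fst))
  set E := {ω | strictRank (fun l => g (X l ω, Y l ω, YL l ω, YU l ω)) (Fin.last n) < k}
  have hE : (k : ENNReal) ≤ (n + 1 : ℕ) * P E := by
    simpa using natCast_le_card_mul_measure_strictRank_lt
      (fun i => (hX i).prodMk ((hY i).prodMk ((hYL i).prodMk (hYU i)))) hindep hident hg hk
      (Fin.last n)
  have hkα : ((n + 1 : ℕ) : ENNReal) * ENNReal.ofReal (1 - α) ≤ k := by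
    rw [← ENNReal.ofReal_natCast, ← ENNReal.ofReal_mul (by positivity), ← ENNReal.ofReal_natCast k]
    exact ENNReal.ofReal_le_ofReal (by rw [mul_comm]; push_cast; exact Nat.le_ceil _)
  calc ENNReal.ofReal (1 - α) ≤ P E := (ENNReal.mul_le_mul_iff_right (by simp) (by simp)).1 (hkα.trans hE)
    _ ≤ _ := measure_mono_ae <| (hbound (Fin.last n)).mono
        fun ω ⟨hyL, hyU⟩ (hω : strictRank _ _ < k) => by
        rw [strictRank_last] at hω
        exact exists_mem_widened_of_intervalScore_le hMne (le_orderStat_of_card_lt hω) hyL hyU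

/-- split-conformal validity under interval censoring. For i.i.d. data
`(Xᵢ, Yᵢ, Yᵢ^L, Yᵢ^U)` with `Yᵢ^L ≤ Yᵢ ≤ Yᵢ^U` a.s., a fixed measurable set-valued
predictor `x ↦ ⊔ₘ [τ₀ₘ(x), τ₁ₘ(x)]`, calibration scores
`sⱼ = minₘ max(τ₀ₘ(Xⱼ) − Yⱼ^L, Yⱼ^U − τ₁ₘ(Xⱼ))` for `j = 1, …, n`, and `ϑ` the
`⌈(1−α)(n+1)⌉`-th smallest score, the conformal set
`C̃(x) = ⋃ₘ [τ₀ₘ(x) − ϑ, τ₁ₘ(x) + ϑ]` satisfies `P(Y_{n+1} ∈ C̃(X_{n+1})) ≥ 1 − α`. -/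
theorem split_conformal_validity_interval_censoring
    {Ω 𝓧 : Type*} [MeasureSpace Ω] [MeasurableSpace 𝓧]
    (P : Measure Ω) [IsProbabilityMeasure P]
    (n : ℕ) (X : Fin (n + 1) → Ω → 𝓧) (Y YL YU : Fin (n + 1) → Ω → ℝ)
    (hX : ∀ i, Measurable (X i)) (hY : ∀ i, Measurable (Y i))
    (hYL : ∀ i, Measurable (YL i)) (hYU : ∀ i, Measurable (YU i))
    (hbound : ∀ i, ∀ᵐ ω ∂P, YL i ω ≤ Y i ω ∧ Y i ω ≤ YU i ω)
    (hindep : iIndepFun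
      (fun i ω => (X i ω, Y i ω, YL i ω, YU i ω)) P)
    (hident : ∀ i j : Fin (n + 1), IdentDistrib
      (fun ω => (X i ω, Y i ω, YL i ω, YU i ω))
      (fun ω => (X j ω, Y j ω, YL j ω, YU j ω)) P P)
    (M : ℕ) (hM : 0 < M) (τ₀ τ₁ : 𝓧 → Fin M → ℝ)
    (hτ₀ : ∀ m, Measurable fun x => τ₀ x m) (hτ₁ : ∀ m, Measurable fun x => τ₁ x m)
    (hτ : ∀ x m, τ₀ x m ≤ τ₁ x m)
    (hτdisj : ∀ x, ∀ m m' : Fin M, m < m' → τ₁ x m < τ₀ x m')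
    (α : ℝ) (hα : α ∈ Set.Ioo (0 : ℝ) 1) :
    P {ω | ∃ m,
        (τ₀ (X (Fin.last n) ω) m : EReal)
            - orderStat n (fun j => Finset.univ.inf'
                (Finset.univ_nonempty_iff.mpr (Fin.pos_iff_nonempty.mp hM))
                (fun m' => max (τ₀ (X j.castSucc ω) m' - YL j.castSucc ω)
                  (YU j.castSucc ω - τ₁ (X j.castSucc ω) m'))) ⌈(1 - α) * (n + 1)⌉₊
          ≤ (Y (Fin.last n) ω : EReal) ∧
        (Y (Fin.last n) ω : EReal)
          ≤ (τ₁ (X (Fin.last n) ω) m : EReal)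
            + orderStat n (fun j => Finset.univ.inf'
                (Finset.univ_nonempty_iff.mpr (Fin.pos_iff_nonempty.mp hM))
                (fun m' => max (τ₀ (X j.castSucc ω) m' - YL j.castSucc ω)
                  (YU j.castSucc ω - τ₁ (X j.castSucc ω) m'))) ⌈(1 - α) * (n + 1)⌉₊}
      ≥ ENNReal.ofReal (1 - α) :=
  split_conformal_validity_interval_censoring_general P n X Y YL YU hX hY hYL hYU hbound hindep
    hident M hM τ₀ τ₁ hτ₀ hτ₁ α hα
end

section
/- Failure of exact empirical optimization under fixed censoring: let (Y_i^L, Y_i^U), i = 1,…,n, be i.i.d. with P((Y^L, Y^U) = (0,1)) = P((Y^L, Y^U) = (0,2)) = 1/2. Define P_n(a,b) = n^{-1} Σ_i 1{a ≤ Y_i^L ∧ Y_i^U ≤ b} and let Č = [0, 1 + 1{P_n(0,1) < 1/2}] be the shortest interval [0, b] with P_n(0,b) ≥ 1/2. Then P(Č = [0,2]) = P(#{i : Y_i^U = 2} > n/2) → 1/2 as n → ∞; in particular Č is not a consistent estimator of the oracle interval C* = [0,1]. -/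
/-!
Almost surely every observation equals `(0, 1)` or `(0, 2)`, so the number of indices with
`Y^U ≤ 1` is `n - N` with `N = #{i : Yᵢ^U = 2}`, and `Č = [0, 2]` exactly when `N > n / 2`.
The events `{Yᵢ^U = 2}` are independent fair coins, so the random set of such indices is
uniformly distributed on the subsets of `{0, …, n - 1}`. Complementation exchanges the subsets
with more and with fewer than `n / 2` elements, hence `P(N > n / 2) = (1 - P(N = n / 2)) / 2`.
The tie probability is at most `C(2m, m) / 4^m` with `m = ⌊n / 2⌋`, which tends to `0` because
`(C(2m, m) / 4^m)² (2m + 1) ≤ 1`.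
-/

open MeasureTheory ProbabilityTheory Finset Filter Topology

namespace Nat

theorem centralBinom_div_four_pow_sq_mul_le (m : ℕ) :
    ((centralBinom m : ℝ) / 4 ^ m) ^ 2 * (2 * m + 1) ≤ 1 := by
  induction m with
  | zero => simp
  | succ m ih =>
    have hstep : (centralBinom (m + 1) : ℝ) / 4 ^ (m + 1)
        = centralBinom m / 4 ^ m * ((2 * m + 1) / (2 * m + 2)) := by
      have hrec : ((m : ℝ) + 1) * centralBinom (m + 1) = 2 * (2 * m + 1) * centralBinom m := by
        exact_mod_cast succ_mul_centralBinom_succ m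
      field_simp
      linear_combination (2 * 4 ^ m : ℝ) * hrec
    have hratio : ((2 * (m : ℝ) + 1) / (2 * m + 2)) ^ 2 * (2 * (m + 1 : ℕ) + 1) ≤ 2 * m + 1 := by
      rw [div_pow, div_mul_eq_mul_div, div_le_iff₀ (by positivity)]
      push_cast
      nlinarith
    calc ((centralBinom (m + 1) : ℝ) / 4 ^ (m + 1)) ^ 2 * (2 * (m + 1 : ℕ) + 1)
        = ((centralBinom m : ℝ) / 4 ^ m) ^ 2
            * (((2 * m + 1) / (2 * m + 2)) ^ 2 * (2 * (m + 1 : ℕ) + 1)) := by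
          rw [hstep]; ring
      _ ≤ ((centralBinom m : ℝ) / 4 ^ m) ^ 2 * (2 * m + 1) := by gcongr
      _ ≤ 1 := ih

theorem tendsto_centralBinom_div_four_pow :
    Tendsto (fun m : ℕ => (centralBinom m : ℝ) / 4 ^ m) atTop (𝓝 0) := by
  have hsq : Tendsto (fun m : ℕ => ((centralBinom m : ℝ) / 4 ^ m) ^ 2) atTop (𝓝 0) := by
    refine squeeze_zero (fun m => sq_nonneg _) (fun m => ?_)
      tendsto_one_div_add_atTop_nhds_zero_nat
    rw [le_div_iff₀ (by positivity)]
    nlinarith [centralBinom_div_four_pow_sq_mul_le m, sq_nonneg ((centralBinom m : ℝ) / 4 ^ m)]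
  simpa using (hsq.sqrt).congr fun m => Real.sqrt_sq (by positivity)

end Nat

namespace Finset

theorem card_powerset_filter_two_mul_card_eq {α : Type*} (t : Finset α) :
    #{s ∈ t.powerset | 2 * #s = #t} = if Even #t then Nat.centralBinom (#t / 2) else 0 := by
  split_ifs with h
  · obtain ⟨m, hm⟩ := h
    rw [show #t / 2 = m by omega, Nat.centralBinom_eq_two_mul_choose, two_mul, ← hm,
      ← card_powersetCard, powersetCard_eq_filter]
    exact congrArg card (filter_congr fun s _ => by omega)
  · rw [card_eq_zero, filter_eq_empty_iff]
    rintro s - hs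
    exact h ⟨#s, by omega⟩

theorem two_mul_card_powerset_filter_lt_add_card_filter_eq {α : Type*} [DecidableEq α]
    (t : Finset α) :
    2 * #{s ∈ t.powerset | #t < 2 * #s} + #{s ∈ t.powerset | 2 * #s = #t} = 2 ^ #t := by
  have hcompl : #{s ∈ t.powerset | 2 * #s < #t} = #{s ∈ t.powerset | #t < 2 * #s} := by
    refine card_nbij' (t \ ·) (t \ ·) ?_ ?_ ?_ ?_ <;> intro s hs <;>
      simp only [coe_filter, mem_powerset, Set.mem_ofPred_eq] at hs ⊢
    · rw [card_sdiff_of_subset hs.1]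
      exact ⟨sdiff_subset, by have := card_le_card hs.1; omega⟩
    · rw [card_sdiff_of_subset hs.1]
      exact ⟨sdiff_subset, by have := card_le_card hs.1; omega⟩
    · exact sdiff_sdiff_eq_self hs.1
    · exact sdiff_sdiff_eq_self hs.1
  have hsplit : #{s ∈ t.powerset | ¬ #t < 2 * #s}
      = #{s ∈ t.powerset | 2 * #s < #t} + #{s ∈ t.powerset | 2 * #s = #t} := by
    rw [← card_union_of_disjoint (disjoint_filter.2 fun s _ h => by omega), ← filter_or]
    exact congrArg card (filter_congr fun s _ => by omega)
  have htotal := card_filter_add_card_filter_not (s := t.powerset) (p := fun s => #t < 2 * #s)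
  rw [card_powerset] at htotal
  omega

theorem tendsto_card_powerset_filter_two_mul_card_eq_div_two_pow :
    Tendsto (fun n : ℕ => (#{s ∈ (range n).powerset | 2 * #s = n} : ℝ) / 2 ^ n) atTop (𝓝 0) := by
  refine squeeze_zero (fun n => by positivity) (fun n => ?_)
    (Nat.tendsto_centralBinom_div_four_pow.comp (Nat.tendsto_div_const_atTop two_ne_zero))
  have htie := card_powerset_filter_two_mul_card_eq (range n)
  rw [card_range] at htie
  rw [htie, Function.comp_apply]
  split_ifs with h
  · obtain ⟨m, rfl⟩ := h
    rw [← two_mul, Nat.mul_div_cancel_left m two_pos, pow_mul]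
    norm_num
  · simp only [CharP.cast_eq_zero, zero_div]
    positivity

end Finset

section IndependentTrials

variable {Ω β : Type*} {X : ℕ → Ω → β} {T : Set β} [∀ i ω, Decidable (X i ω ∈ T)]
  {n : ℕ} {s : Finset ℕ}

theorem setOf_filter_range_eq_iInter (hs : s ⊆ range n) :
    {ω | {i ∈ range n | X i ω ∈ T} = s}
      = ⋂ i ∈ range n, X i ⁻¹' (if i ∈ s then T else Tᶜ) := by
  ext ω
  simp only [Set.mem_ofPred_eq, Set.mem_iInter, Set.mem_preimage, Finset.ext_iff, mem_filter]
  refine ⟨fun h i hi => ?_, fun h i => ?_⟩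
  · by_cases his : i ∈ s <;> simpa [his, hi] using h i
  · by_cases hi : i ∈ range n
    · by_cases his : i ∈ s <;> simpa [his, hi] using h i hi
    · exact iff_of_false (fun h' => hi h'.1) (fun h' => hi (hs h'))

theorem setOf_filter_range_eq_biUnion (q : Finset ℕ → Prop) [DecidablePred q] :
    {ω | q {i ∈ range n | X i ω ∈ T}}
      = ⋃ s ∈ {s ∈ (range n).powerset | q s}, {ω | {i ∈ range n | X i ω ∈ T} = s} := by
  ext ω
  simp only [Set.mem_ofPred_eq, Set.mem_iUnion, mem_filter, mem_powerset, exists_prop]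
  exact ⟨fun h => ⟨_, ⟨filter_subset _ _, h⟩, rfl⟩, by rintro ⟨s, ⟨-, hq⟩, rfl⟩; exact hq⟩

variable [MeasurableSpace Ω] [MeasurableSpace β] {P : Measure Ω}

theorem measurableSet_setOf_filter_range_eq (hX : ∀ i, Measurable (X i)) (hT : MeasurableSet T)
    (hs : s ⊆ range n) : MeasurableSet {ω | {i ∈ range n | X i ω ∈ T} = s} := by
  rw [setOf_filter_range_eq_iInter hs]
  refine .biInter (range n).countable_toSet fun i _ => hX i ?_
  split_ifs
  exacts [hT, hT.compl]

theorem measure_setOf_filter_range_eq (hindep : iIndepFun X P) (hX : ∀ i, Measurable (X i))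
    (hT : MeasurableSet T) {p : ENNReal} (hp : ∀ i, P (X i ⁻¹' T) = p) (hs : s ⊆ range n) :
    P {ω | {i ∈ range n | X i ω ∈ T} = s} = p ^ #s * (1 - p) ^ (n - #s) := by
  have := hindep.isProbabilityMeasure
  rw [setOf_filter_range_eq_iInter hs, hindep.meas_biInter fun i _ => ⟨_, ?_, rfl⟩]
  · have hfactor : ∀ i, P (X i ⁻¹' (if i ∈ s then T else Tᶜ)) = if i ∈ s then p else 1 - p := by
      intro i
      split_ifs
      exacts [hp i, by rw [Set.preimage_compl, prob_compl_eq_one_sub (hX i hT), hp]]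
    rw [prod_congr rfl fun i _ => hfactor i, prod_ite, prod_const, prod_const, filter_not,
      filter_mem_eq_inter, inter_eq_right.2 hs, card_sdiff_of_subset hs, card_range]
  · split_ifs
    exacts [hT, hT.compl]

theorem measurableSet_setOf_filter_range (hX : ∀ i, Measurable (X i)) (hT : MeasurableSet T)
    (q : Finset ℕ → Prop) [DecidablePred q] : MeasurableSet {ω | q {i ∈ range n | X i ω ∈ T}} := by
  rw [setOf_filter_range_eq_biUnion]
  exact Finset.measurableSet_biUnion _ fun s hs =>
    measurableSet_setOf_filter_range_eq hX hT (mem_powerset.1 (mem_filter.1 hs).1)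

theorem measure_setOf_filter_range_of_fair (hindep : iIndepFun X P) (hX : ∀ i, Measurable (X i))
    (hT : MeasurableSet T) (hp : ∀ i, P (X i ⁻¹' T) = 2⁻¹) (q : Finset ℕ → Prop)
    [DecidablePred q] :
    P {ω | q {i ∈ range n | X i ω ∈ T}} = #{s ∈ (range n).powerset | q s} * 2⁻¹ ^ n := by
  have hdisj : (({s ∈ (range n).powerset | q s} : Finset _) : Set (Finset ℕ)).PairwiseDisjoint
      fun s => {ω | {i ∈ range n | X i ω ∈ T} = s} :=
    fun s _ t _ hst => Set.disjoint_left.2 fun ω hs ht => hst (hs.symm.trans ht)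
  have hsubset : ∀ s ∈ {s ∈ (range n).powerset | q s}, s ⊆ range n :=
    fun s hs => mem_powerset.1 (mem_filter.1 hs).1
  rw [setOf_filter_range_eq_biUnion, measure_biUnion_finset hdisj
    fun s hs => measurableSet_setOf_filter_range_eq hX hT (hsubset s hs)]
  rw [sum_congr rfl fun s hs => ?_, sum_const, nsmul_eq_mul]
  rw [measure_setOf_filter_range_eq hindep hX hT hp (hsubset s hs), ENNReal.one_sub_inv_two,
    ← pow_add, Nat.add_sub_cancel' (by simpa using card_le_card (hsubset s hs))]

theorem toReal_measure_setOf_half_lt_card_filter_range (hindep : iIndepFun X P)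
    (hX : ∀ i, Measurable (X i)) (hT : MeasurableSet T) (hp : ∀ i, P (X i ⁻¹' T) = 2⁻¹) (n : ℕ) :
    (P {ω | (n : ℝ) / 2 < #{i ∈ range n | X i ω ∈ T}}).toReal
      = (1 - #{s ∈ (range n).powerset | 2 * #s = n} / 2 ^ n) / 2 := by
  have hcount := two_mul_card_powerset_filter_lt_add_card_filter_eq (range n)
  rw [card_range] at hcount
  have hcount' : 2 * (#{s ∈ (range n).powerset | n < 2 * #s} : ℝ)
      + #{s ∈ (range n).powerset | 2 * #s = n} = 2 ^ n := by exact_mod_cast hcount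
  have hmajority : #{s ∈ (range n).powerset | (n : ℝ) / 2 < #s}
      = #{s ∈ (range n).powerset | n < 2 * #s} :=
    congrArg card <| filter_congr fun s _ => by
      rw [div_lt_iff₀ two_pos]; norm_cast; omega
  rw [measure_setOf_filter_range_of_fair hindep hX hT hp (fun s => (n : ℝ) / 2 < #s), hmajority,
    ENNReal.toReal_mul, ENNReal.toReal_pow, ENNReal.toReal_inv, ENNReal.toReal_natCast,
    ENNReal.toReal_ofNat, inv_pow]
  field_simp
  linarith

theorem tendsto_toReal_measure_setOf_half_lt_card_filter_range (hindep : iIndepFun X P)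
    (hX : ∀ i, Measurable (X i)) (hT : MeasurableSet T) (hp : ∀ i, P (X i ⁻¹' T) = 2⁻¹) :
    Tendsto (fun n : ℕ => (P {ω | (n : ℝ) / 2 < #{i ∈ range n | X i ω ∈ T}}).toReal)
      atTop (𝓝 (1 / 2)) := by
  simp only [toReal_measure_setOf_half_lt_card_filter_range hindep hX hT hp]
  simpa using ((tendsto_const_nhds (x := (1 : ℝ))).sub
    tendsto_card_powerset_filter_two_mul_card_eq_div_two_pow).div_const (2 : ℝ)

end IndependentTrials

theorem ae_mem_or_mem_of_measure_add_measure_eq_one {Ω : Type*} [MeasurableSpace Ω]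
    {P : Measure Ω} [IsProbabilityMeasure P] {A B : Set Ω} (hA : MeasurableSet A)
    (hB : MeasurableSet B) (hAB : Disjoint A B) (h : P A + P B = 1) :
    ∀ᵐ ω ∂P, ω ∈ A ∨ ω ∈ B := by
  exact ae_iff.2 <| (prob_compl_eq_zero_iff (hA.union hB)).2 (by rw [measure_union hAB hB, h])

theorem ae_forall_eq_zero_one_or_eq_zero_two {Ω : Type*} [MeasurableSpace Ω] {P : Measure Ω}
    [IsProbabilityMeasure P] {YL YU : ℕ → Ω → ℝ} (hYL : ∀ i, Measurable (YL i))
    (hYU : ∀ i, Measurable (YU i))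
    (hlaw : ∀ i, P {ω | YL i ω = 0 ∧ YU i ω = 1} = 1 / 2 ∧
      P {ω | YL i ω = 0 ∧ YU i ω = 2} = 1 / 2) :
    ∀ᵐ ω ∂P, ∀ i, (YL i ω = 0 ∧ YU i ω = 1) ∨ (YL i ω = 0 ∧ YU i ω = 2) := by
  have hpair : ∀ i (y : ℝ), MeasurableSet {ω | YL i ω = 0 ∧ YU i ω = y} := fun i y =>
    (measurableSet_eq_fun (hYL i) measurable_const).inter
      (measurableSet_eq_fun (hYU i) measurable_const)
  exact ae_all_iff.2 fun i => (ae_mem_or_mem_of_measure_add_measure_eq_one (hpair i 1) (hpair i 2)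
    (Set.disjoint_left.2 fun ω h1 h2 => by norm_num [h1.2] at h2)
    (by rw [(hlaw i).1, (hlaw i).2, ENNReal.add_halves]) :)

theorem card_filter_le_one_lt_half_iff {a b : ℕ → ℝ}
    (hab : ∀ i, (a i = 0 ∧ b i = 1) ∨ (a i = 0 ∧ b i = 2)) (n : ℕ) :
    (#{i ∈ range n | 0 ≤ a i ∧ b i ≤ 1} : ℝ) < n / 2 ↔ (n : ℝ) / 2 < #{i ∈ range n | b i = 2} := by
  have hle : {i ∈ range n | 0 ≤ a i ∧ b i ≤ 1} = {i ∈ range n | ¬ b i = 2} :=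
    filter_congr fun i _ => by rcases hab i with ⟨ha, hb⟩ | ⟨ha, hb⟩ <;> norm_num [ha, hb]
  have hsplit : (#{i ∈ range n | b i = 2} : ℝ) + #{i ∈ range n | ¬ b i = 2} = n := by
    exact_mod_cast card_range n ▸ card_filter_add_card_filter_not (s := range n) (p := (b · = 2))
  rw [hle]
  constructor <;> intro h <;> linarith

theorem Icc_zero_one_add_ite_eq_Icc_zero_two_iff (c : Prop) [Decidable c] :
    Set.Icc (0 : ℝ) (1 + if c then 1 else 0) = Set.Icc 0 2 ↔ c := by
  split_ifs with h <;> norm_num [Set.Icc_eq_Icc_iff, h]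

theorem Icc_zero_one_add_ite_eq_Icc_zero_one_iff (c : Prop) [Decidable c] :
    Set.Icc (0 : ℝ) (1 + if c then 1 else 0) = Set.Icc 0 1 ↔ ¬ c := by
  split_ifs with h <;> norm_num [Set.Icc_eq_Icc_iff, h]

open scoped Classical in
/-- failure of exact empirical optimization under fixed censoring. For
i.i.d. pairs with `P((Y^L,Y^U)=(0,1)) = P((Y^L,Y^U)=(0,2)) = 1/2`, the exact empirical
minimizer `Ccheck = [0, 1 + 1{P_n(0,1) < 1/2}]` satisfies
`P(Ccheck = [0,2]) = P(#{i : Yᵢ^U = 2} > n/2) → 1/2`; in particular `Ccheck` is not consistent for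
the oracle interval `C* = [0,1]`. -/
theorem exact_empirical_optimization_inconsistent_fixed_censoring
    {Ω : Type*} [MeasureSpace Ω] (P : Measure Ω) [IsProbabilityMeasure P]
    (YL YU : ℕ → Ω → ℝ) (hYL : ∀ i, Measurable (YL i)) (hYU : ∀ i, Measurable (YU i))
    (hindep : iIndepFun (fun i ω => (YL i ω, YU i ω)) P)
    (hlaw : ∀ i, P {ω | YL i ω = 0 ∧ YU i ω = 1} = 1 / 2 ∧
                 P {ω | YL i ω = 0 ∧ YU i ω = 2} = 1 / 2)
    (Ccheck : ℕ → Ω → Set ℝ)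
    (hCcheck : ∀ n ω, Ccheck n ω = Set.Icc (0 : ℝ)
        (1 + if ((((Finset.range n).filter fun i =>
              (0 : ℝ) ≤ YL i ω ∧ YU i ω ≤ 1).card : ℝ) < (n : ℝ) / 2) then 1 else 0)) :
    (∀ n, P {ω | Ccheck n ω = Set.Icc (0 : ℝ) 2}
        = P {ω | (n : ℝ) / 2 < (((Finset.range n).filter fun i => YU i ω = 2).card : ℝ)}) ∧
    Tendsto (fun n => (P {ω | Ccheck n ω = Set.Icc (0 : ℝ) 2}).toReal) atTop (nhds (1 / 2)) ∧
    ¬ Tendsto (fun n => (P {ω | Ccheck n ω = Set.Icc (0 : ℝ) 1}).toReal) atTop (nhds 1) := by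
  have hgood := ae_forall_eq_zero_one_or_eq_zero_two hYL hYU hlaw
  have hfair : ∀ i, P (YU i ⁻¹' {2}) = 2⁻¹ := fun i => by
    rw [← one_div, ← (hlaw i).2]
    refine measure_congr (eventuallyEq_set.2 (hgood.mono fun ω hω => ?_))
    rcases hω i with ⟨hL, hU⟩ | ⟨hL, hU⟩ <;> simp [hL, hU]
  have hwide : ∀ n, {ω | Ccheck n ω = Set.Icc (0 : ℝ) 2}
      =ᵐ[P] {ω | (n : ℝ) / 2 < #{i ∈ range n | YU i ω = 2}} := fun n =>
    eventuallyEq_set.2 <| hgood.mono fun ω hω => by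
      simp only [Set.mem_ofPred_eq, hCcheck, Icc_zero_one_add_ite_eq_Icc_zero_two_iff,
        card_filter_le_one_lt_half_iff hω]
  have hnarrow : ∀ n, {ω | Ccheck n ω = Set.Icc (0 : ℝ) 1}
      =ᵐ[P] {ω | ¬ (n : ℝ) / 2 < #{i ∈ range n | YU i ω = 2}} := fun n =>
    eventuallyEq_set.2 <| hgood.mono fun ω hω => by
      simp only [Set.mem_ofPred_eq, hCcheck, Icc_zero_one_add_ite_eq_Icc_zero_one_iff,
        card_filter_le_one_lt_half_iff hω]
  have hindepU : iIndepFun YU P := hindep.comp (fun _ => Prod.snd) fun _ => measurable_snd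
  have hmajority := tendsto_toReal_measure_setOf_half_lt_card_filter_range hindepU hYU
    (measurableSet_singleton 2) hfair
  simp only [Set.mem_singleton_iff] at hmajority
  refine ⟨fun n => measure_congr (hwide n),
    by simpa only [measure_congr (hwide _)] using hmajority, fun hconsistent => ?_⟩
  have hnarrow_real : ∀ n : ℕ, (P {ω | Ccheck n ω = Set.Icc (0 : ℝ) 1}).toReal
      = 1 - (P {ω | (n : ℝ) / 2 < #{i ∈ range n | YU i ω = 2}}).toReal := fun n => by
    rw [measure_congr (hnarrow n)]
    refine probReal_compl_eq_one_sub (s := {ω | (n : ℝ) / 2 < #{i ∈ range n | YU i ω = 2}}) ?_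
    simpa only [Set.mem_singleton_iff] using measurableSet_setOf_filter_range hYU
      (measurableSet_singleton 2) (fun s => (n : ℝ) / 2 < #s)
  have hlimit := tendsto_nhds_unique (hconsistent.congr hnarrow_real)
    ((tendsto_const_nhds (x := (1 : ℝ))).sub hmajority)
  norm_num at hlimit
end

section
/- Relaxed empirical optimization restores consistency in the two-point example: in the same setting (P((Y^L,Y^U)=(0,1)) = P((Y^L,Y^U)=(0,2)) = 1/2), if ψ_n > 0 satisfies √n ψ_n → ∞ and ψ_n → 0, and Ĉ is the shortest interval [0, b] with P_n(0, b) ≥ 1/2 − ψ_n, then P(Ĉ = [0,1]) → 1 as n → ∞. -/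
open MeasureTheory ProbabilityTheory Finset Filter

/-!
`Ĉ = [0, 1]` fails only on the event that the empirical frequency of `{Y^L ≥ 0, Y^U ≤ 1}`, a
mean of independent Bernoulli(1/2) indicators, falls more than `ψₙ` below `1/2`. By Chebyshev
this has probability at most `(1/4) / (√n ψₙ)²`, which tends to `0`.
-/

namespace ProbabilityTheory

variable {Ω ι : Type*} [MeasurableSpace Ω] {P : Measure Ω}

lemma iIndepFun.iIndepSet_preimage {β : Type*} [MeasurableSpace β] {X : ι → Ω → β}
    (hX : iIndepFun X P) {S : Set β} (hS : MeasurableSet S) :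
    iIndepSet (fun i => X i ⁻¹' S) P :=
  (iIndepSet_iff_iIndep _ _).2 <| iIndep_of_iIndep_of_le ((iIndepFun_iff_iIndep _ _ _).1 hX)
    fun _ => MeasurableSpace.generateFrom_le <| by rintro _ rfl; exact ⟨S, hS, rfl⟩

lemma memLp_indicator_one [IsFiniteMeasure P] {s : Set Ω} (hs : MeasurableSet s) (q : ENNReal) :
    MemLp (s.indicator (1 : Ω → ℝ)) q P :=
  memLp_indicator_const q hs 1 (Or.inr (measure_ne_top _ _))

variable [IsProbabilityMeasure P]

lemma variance_indicator_one {s : Set Ω} (hs : MeasurableSet s) :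
    variance (s.indicator 1) P = P.real s * (1 - P.real s) := by
  have hsq : s.indicator (1 : Ω → ℝ) ^ 2 = s.indicator 1 := by
    ext ω; by_cases h : ω ∈ s <;> simp [h]
  rw [variance_eq_sub (memLp_indicator_one hs 2), hsq, integral_indicator_one hs]
  ring

lemma measureReal_sum_indicator_div_lt_le {B : ℕ → Set Ω} (hB : ∀ i, MeasurableSet (B i))
    (hindep : iIndepSet B P) {p : ℝ} (hp : ∀ i, P.real (B i) = p) {n : ℕ} (hn : 0 < n)
    {ε : ℝ} (hε : 0 < ε) :
    P.real {ω | (∑ i ∈ range n, (B i).indicator 1 ω) / n < p - ε}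
      ≤ p * (1 - p) / (n * ε ^ 2) := by
  set S : Ω → ℝ := ∑ i ∈ range n, (B i).indicator 1 with hS
  have hn' : (0 : ℝ) < n := Nat.cast_pos.2 hn
  have hmem : ∀ i, MemLp ((B i).indicator (1 : Ω → ℝ)) 2 P := fun i => memLp_indicator_one (hB i) 2
  have hmean : P[S] = n * p := by
    simp only [hS, Finset.sum_apply]
    rw [integral_finsetSum _ fun i _ => (hmem i).integrable one_le_two]
    simp [integral_indicator_one (hB _), hp]
  have hvar : variance S P = n * (p * (1 - p)) := by
    rw [IndepFun.variance_sum (fun i _ => hmem i)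
      fun i _ j _ hij => hindep.iIndepFun_indicator.indepFun hij]
    simp [variance_indicator_one (hB _), hp]
  have hsub : {ω | (∑ i ∈ range n, (B i).indicator 1 ω) / n < p - ε}
      ⊆ {ω | n * ε ≤ |S ω - P[S]|} := by
    intro ω hω
    rw [Set.mem_ofPred_eq, div_lt_iff₀ hn'] at hω
    rw [Set.mem_ofPred_eq, hmean, le_abs, hS, Finset.sum_apply]
    right; linarith
  calc P.real {ω | (∑ i ∈ range n, (B i).indicator 1 ω) / n < p - ε}
      ≤ P.real {ω | n * ε ≤ |S ω - P[S]|} := measureReal_mono hsub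
    _ ≤ variance S P / (n * ε) ^ 2 :=
        ENNReal.toReal_le_of_le_ofReal (div_nonneg (variance_nonneg _ _) (sq_nonneg _))
          (meas_ge_le_variance_div_sq (memLp_finsetSum' _ fun i _ => hmem i) (mul_pos hn' hε))
    _ = p * (1 - p) / (n * ε ^ 2) := by rw [hvar]; field_simp

lemma tendsto_measureReal_sum_indicator_div_lt {B : ℕ → Set Ω} (hB : ∀ i, MeasurableSet (B i))
    (hindep : iIndepSet B P) {p : ℝ} (hp : ∀ i, P.real (B i) = p) {ψ : ℕ → ℝ}
    (hψpos : ∀ n, 0 < ψ n) (hψrate : Tendsto (fun n : ℕ => Real.sqrt n * ψ n) atTop atTop) :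
    Tendsto (fun n => P.real {ω | (∑ i ∈ range n, (B i).indicator 1 ω) / n < p - ψ n})
      atTop (nhds 0) := by
  have hbound : Tendsto (fun n : ℕ => p * (1 - p) / (Real.sqrt n * ψ n) ^ 2) atTop (nhds 0) :=
    tendsto_const_nhds.div_atTop (tendsto_pow_atTop two_ne_zero |>.comp hψrate)
  refine squeeze_zero' (Eventually.of_forall fun _ => measureReal_nonneg) ?_ hbound
  filter_upwards [eventually_gt_atTop 0] with n hn
  rw [mul_pow, Real.sq_sqrt n.cast_nonneg]
  exact measureReal_sum_indicator_div_lt_le hB hindep hp hn (hψpos n)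

end ProbabilityTheory

lemma measureReal_lower_nonneg_upper_le_one {Ω : Type*} [MeasurableSpace Ω] {P : Measure Ω}
    [IsProbabilityMeasure P] {YL YU : Ω → ℝ} (hYL : Measurable YL) (hYU : Measurable YU)
    (h1 : P {ω | YL ω = 0 ∧ YU ω = 1} = 1 / 2) (h2 : P {ω | YL ω = 0 ∧ YU ω = 2} = 1 / 2) :
    P.real {ω | 0 ≤ YL ω ∧ YU ω ≤ 1} = 1 / 2 := by
  have h2meas : MeasurableSet {ω | YL ω = 0 ∧ YU ω = 2} :=
    (hYL (measurableSet_singleton 0)).inter (hYU (measurableSet_singleton 2))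
  apply le_antisymm
  · calc P.real {ω | 0 ≤ YL ω ∧ YU ω ≤ 1} ≤ P.real {ω | YL ω = 0 ∧ YU ω = 2}ᶜ :=
          measureReal_mono fun ω hω h => by linarith [hω.2, h.2]
      _ = 1 / 2 := by rw [probReal_compl_eq_one_sub h2meas, measureReal_def, h2]; norm_num
  · calc (1 / 2 : ℝ) = P.real {ω | YL ω = 0 ∧ YU ω = 1} := by rw [measureReal_def, h1]; norm_num
      _ ≤ P.real {ω | 0 ≤ YL ω ∧ YU ω ≤ 1} :=
          measureReal_mono fun ω hω => ⟨hω.1.ge, hω.2.le⟩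

open scoped Classical in
theorem relaxed_empirical_optimization_consistent_fixed_censoring_general
    {Ω : Type*} [MeasureSpace Ω] (P : Measure Ω) [IsProbabilityMeasure P]
    (YL YU : ℕ → Ω → ℝ) (hYL : ∀ i, Measurable (YL i)) (hYU : ∀ i, Measurable (YU i))
    (hindep : iIndepFun (fun i ω => (YL i ω, YU i ω)) P)
    (hlaw : ∀ i, P {ω | YL i ω = 0 ∧ YU i ω = 1} = 1 / 2 ∧
                 P {ω | YL i ω = 0 ∧ YU i ω = 2} = 1 / 2)
    (ψ : ℕ → ℝ) (hψpos : ∀ n, 0 < ψ n)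
    (hψrate : Tendsto (fun n : ℕ => Real.sqrt n * ψ n) atTop atTop)
    (Chat : ℕ → Ω → Set ℝ)
    (hChat : ∀ n ω, Chat n ω = Set.Icc (0 : ℝ)
        (1 + if ((((Finset.range n).filter fun i =>
              (0 : ℝ) ≤ YL i ω ∧ YU i ω ≤ 1).card : ℝ) / n < 1 / 2 - ψ n) then 1 else 0)) :
    Tendsto (fun n => (P {ω | Chat n ω = Set.Icc (0 : ℝ) 1}).toReal) atTop (nhds 1) := by
  set B : ℕ → Set Ω := fun i => {ω | 0 ≤ YL i ω ∧ YU i ω ≤ 1}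
  have hB : ∀ i, MeasurableSet (B i) := fun i =>
    (measurableSet_le measurable_const (hYL i)).inter (measurableSet_le (hYU i) measurable_const)
  have hBindep : iIndepSet B P :=
    hindep.iIndepSet_preimage ((measurableSet_le measurable_const measurable_fst).inter
      (measurableSet_le measurable_snd measurable_const))
  have hPB : ∀ i, P.real (B i) = 1 / 2 := fun i =>
    measureReal_lower_nonneg_upper_le_one (hYL i) (hYU i) (hlaw i).1 (hlaw i).2
  have hevent : ∀ n, {ω | Chat n ω = Set.Icc (0 : ℝ) 1}
      = {ω | (∑ i ∈ range n, (B i).indicator 1 ω) / n < 1 / 2 - ψ n}ᶜ := by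
    intro n
    ext ω
    have hcard : ((((Finset.range n).filter fun i => (0 : ℝ) ≤ YL i ω ∧ YU i ω ≤ 1).card : ℝ))
        = ∑ i ∈ range n, (B i).indicator 1 ω := by
      rw [Finset.natCast_card_filter]
      exact Finset.sum_congr rfl fun i _ => by simp [Set.indicator_apply, B]
    simp only [hChat, hcard, Set.mem_ofPred_eq, Set.mem_compl_iff]
    split_ifs with h
    · exact iff_of_false (by norm_num [Set.Icc_eq_Icc_iff]) (not_not_intro h)
    · exact iff_of_true (by norm_num) h
  have hmeas : ∀ n, MeasurableSet {ω | (∑ i ∈ range n, (B i).indicator 1 ω) / n < 1 / 2 - ψ n} :=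
    fun n => measurableSet_lt ((Finset.measurable_sum _ fun i _ =>
      measurable_const.indicator (hB i)).div_const _) measurable_const
  simp_rw [← measureReal_def, hevent, probReal_compl_eq_one_sub (hmeas _)]
  simpa using (tendsto_measureReal_sum_indicator_div_lt hB hBindep hPB hψpos hψrate).const_sub 1

open scoped Classical in
/-- relaxed empirical optimization restores consistency in the two-point
example. With `P((Y^L,Y^U)=(0,1)) = P((Y^L,Y^U)=(0,2)) = 1/2`, if `ψₙ > 0`, `√n ψₙ → ∞`
and `ψₙ → 0`, then the shortest interval `[0, b]` with `P_n(0, b) ≥ 1/2 − ψₙ`, namely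
`Ĉ = [0, 1 + 1{P_n(0,1) < 1/2 − ψₙ}]`, satisfies `P(Ĉ = [0,1]) → 1`. -/
theorem relaxed_empirical_optimization_consistent_fixed_censoring
    {Ω : Type*} [MeasureSpace Ω] (P : Measure Ω) [IsProbabilityMeasure P]
    (YL YU : ℕ → Ω → ℝ) (hYL : ∀ i, Measurable (YL i)) (hYU : ∀ i, Measurable (YU i))
    (hindep : iIndepFun (fun i ω => (YL i ω, YU i ω)) P)
    (hlaw : ∀ i, P {ω | YL i ω = 0 ∧ YU i ω = 1} = 1 / 2 ∧
                 P {ω | YL i ω = 0 ∧ YU i ω = 2} = 1 / 2)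
    (ψ : ℕ → ℝ) (hψpos : ∀ n, 0 < ψ n)
    (hψrate : Tendsto (fun n : ℕ => Real.sqrt n * ψ n) atTop atTop)
    (hψ0 : Tendsto ψ atTop (nhds 0))
    (Chat : ℕ → Ω → Set ℝ)
    (hChat : ∀ n ω, Chat n ω = Set.Icc (0 : ℝ)
        (1 + if ((((Finset.range n).filter fun i =>
              (0 : ℝ) ≤ YL i ω ∧ YU i ω ≤ 1).card : ℝ) / n < 1 / 2 - ψ n) then 1 else 0)) :
    Tendsto (fun n => (P {ω | Chat n ω = Set.Icc (0 : ℝ) 1}).toReal) atTop (nhds 1) :=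
  relaxed_empirical_optimization_consistent_fixed_censoring_general P YL YU hYL hYU hindep hlaw ψ
    hψpos hψrate Chat hChat
end

section
/- Sharp lower bound attained by a mixture selection: let (Y^L, Y^U) be a random pair with Y^L ≤ Y^U a.s., and let C = ⊔_{m=1}^M [l_m, u_m] be a finite disjoint union of closed intervals with u_m < l_{m+1}. Then there exists a random variable Y' on an enlarged probability space with Y^L ≤ Y' ≤ Y^U a.s. such that P(Y' ∈ C) = P(∃ m, [Y^L, Y^U] ⊆ [l_m, u_m]). Consequently inf{P(Z ∈ C) : Y^L ≤ Z ≤ Y^U a.s.} = P([Y^L, Y^U] ⊆ some component of C). -/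
open MeasureTheory

lemma escape_point {M : ℕ} (l u : Fin M → ℝ) (hlu : ∀ m, l m ≤ u m)
    (hdisj : ∀ m m' : Fin M, m < m' → u m < l m')
    {a b : ℝ} (hab : a ≤ b) (hng : ¬∃ m, l m ≤ a ∧ b ≤ u m) :
    ∃ y, a ≤ y ∧ y ≤ b ∧ y ∉ ⋃ m, Set.Icc (l m) (u m) := by
  have hu_mono : ∀ m m' : Fin M, m' ≤ m → u m' ≤ u m := by
    intro m m' h
    rcases lt_or_eq_of_le h with h | h
    · exact le_trans (le_of_lt (hdisj m' m h)) (hlu m)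
    · rw [h]
  by_cases ha : a ∈ ⋃ m, Set.Icc (l m) (u m)
  · obtain ⟨_, ⟨m, rfl⟩, hm⟩ := ha
    obtain ⟨hla, hau⟩ := hm
    have hbu : u m < b := by
      by_contra h
      exact hng ⟨m, hla, not_lt.mp h⟩
    by_cases hm1 : (m : ℕ) + 1 < M
    · set m1 : Fin M := ⟨(m : ℕ) + 1, hm1⟩ with hm1def
      have hmm1 : m < m1 := by
        simp [Fin.lt_def, hm1def]
      have hgap : u m < l m1 := hdisj m m1 hmm1
      set y := min b ((u m + l m1) / 2) with hy
      have humy : u m < y := lt_min hbu (by linarith)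
      refine ⟨y, le_trans (le_trans hau (le_of_lt humy)) le_rfl, min_le_left _ _, ?_⟩
      intro hyC
      obtain ⟨_, ⟨m', rfl⟩, hly, hyu⟩ := hyC
      rcases le_or_gt m' m with h' | h'
      · exact absurd (lt_of_lt_of_le humy hyu) (not_lt.mpr (hu_mono m m' h'))
      · have hm1m' : m1 ≤ m' := by
          rw [Fin.le_def]
          exact h'
        have : l m1 ≤ l m' := by
          rcases lt_or_eq_of_le hm1m' with h | h
          · exact le_trans (hlu m1) (le_of_lt (hdisj m1 m' h))
          · rw [h]
        have hylt : y < l m1 := lt_of_le_of_lt (min_le_right _ _) (by linarith)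
        linarith
    · refine ⟨b, hab, le_rfl, ?_⟩
      intro hbC
      obtain ⟨_, ⟨m', rfl⟩, hlb, hbu'⟩ := hbC
      rcases le_or_gt m' m with h' | h'
      · exact absurd (lt_of_lt_of_le hbu hbu') (not_lt.mpr (hu_mono m m' h'))
      · exact hm1 (lt_of_le_of_lt (Nat.succ_le_of_lt h') m'.isLt)
  · exact ⟨a, le_rfl, hab, ha⟩

/-- sharp lower bound attained by a selection. -/
theorem sharp_lower_bound_attained
    {Ω : Type*} [MeasureSpace Ω] (P : Measure Ω) [IsProbabilityMeasure P]
    (YL YU : Ω → ℝ) (hYL : Measurable YL) (hYU : Measurable YU)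
    (hle : ∀ᵐ ω ∂P, YL ω ≤ YU ω)
    (M : ℕ) (l u : Fin M → ℝ)
    (hlu : ∀ m, l m ≤ u m)
    (hdisj : ∀ m m' : Fin M, m < m' → u m < l m') :
    (∃ Y' : Ω → ℝ,
      (∀ᵐ ω ∂P, YL ω ≤ Y' ω ∧ Y' ω ≤ YU ω) ∧
      P {ω | Y' ω ∈ ⋃ m, Set.Icc (l m) (u m)}
        = P {ω | ∃ m, l m ≤ YL ω ∧ YU ω ≤ u m}) ∧
    ∀ Z : Ω → ℝ, (∀ᵐ ω ∂P, YL ω ≤ Z ω ∧ Z ω ≤ YU ω) →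
      P {ω | Z ω ∈ ⋃ m, Set.Icc (l m) (u m)}
        ≥ P {ω | ∃ m, l m ≤ YL ω ∧ YU ω ≤ u m} := by
  classical
  constructor
  · refine ⟨fun ω =>
      if h : YL ω ≤ YU ω ∧ ¬∃ m, l m ≤ YL ω ∧ YU ω ≤ u m then
        (escape_point l u hlu hdisj h.1 h.2).choose
      else YL ω, ?_, ?_⟩
    · filter_upwards [hle] with ω hω
      by_cases h : YL ω ≤ YU ω ∧ ¬∃ m, l m ≤ YL ω ∧ YU ω ≤ u m
      · simp only [dif_pos h]
        obtain ⟨h1, h2, _⟩ := (escape_point l u hlu hdisj h.1 h.2).choose_spec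
        exact ⟨h1, h2⟩
      · simp only [dif_neg h]
        exact ⟨le_rfl, hω⟩
    · apply measure_congr
      rw [Filter.eventuallyEq_set]
      filter_upwards [hle] with ω hω
      by_cases h : YL ω ≤ YU ω ∧ ¬∃ m, l m ≤ YL ω ∧ YU ω ≤ u m
      · simp only [dif_pos h]
        obtain ⟨_, _, h3⟩ := (escape_point l u hlu hdisj h.1 h.2).choose_spec
        exact ⟨fun hc => absurd hc h3, fun hg => absurd hg h.2⟩
      · simp only [dif_neg h]
        push_neg at h
        have hg := h hω
        obtain ⟨m, hm1, hm2⟩ := hg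
        exact ⟨fun _ => ⟨m, hm1, hm2⟩,
          fun _ => Set.mem_iUnion.mpr ⟨m, hm1, le_trans hω hm2⟩⟩
  · intro Z hZ
    apply measure_mono_ae
    filter_upwards [hZ] with ω hω
    intro hg
    obtain ⟨m, hm1, hm2⟩ := hg
    exact Set.mem_iUnion.mpr ⟨m, le_trans hm1 hω.1, le_trans hω.2 hm2⟩
end
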